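/- arXiv:2112.07375 — 5 statements merged into one kernel-verified Lean document; each statement's English description precedes it below -/
import Mathlib

section
/- A permutation w in S_n is uniquely determined by its essential set Ess(w) together with the values of the rank function k_w on Ess(w); that is, if w, w' in S_n satisfy Ess(w) = Ess(w') and k_w(q,p) = k_{w'}(q,p) for all (q,p) in this common essential set, then w = w'. -/
/-- The rank function: with 0-indexed conventions, `kfn w q p` is the number of
columns s ≤ p whose pivot value w s exceeds q (this is k_w(q+1,p+1) in the
1-indexed conventions of the paper). -/
def kfn {n : ℕ} (w : Equiv.Perm (Fin n)) (q p : ℕ) : ℕ :=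
  (Finset.univ.filter (fun s : Fin n => (s : ℕ) ≤ p ∧ q < (w s : ℕ))).card

/-- The Rothe diagram of w (0-indexed, as a subset of ℕ × ℕ; boxes outside the
n × n grid are never in the diagram): (i,j) ∈ D(w) iff i < w(j) and j < w⁻¹(i). -/
def rothe {n : ℕ} (w : Equiv.Perm (Fin n)) : Set (ℕ × ℕ) :=
  {b | ∃ hj : b.2 < n, b.1 < (w ⟨b.2, hj⟩ : ℕ) ∧
       ∃ hi : b.1 < n, b.2 < (w.symm ⟨b.1, hi⟩ : ℕ)}

/-- The essential set: the south-east corners of the Rothe diagram. -/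
def essSet {n : ℕ} (w : Equiv.Perm (Fin n)) : Set (ℕ × ℕ) :=
  {b | b ∈ rothe w ∧ (b.1 + 1, b.2) ∉ rothe w ∧ (b.1, b.2 + 1) ∉ rothe w}

open Finset

private lemma filter_perm_card {n : ℕ} (w : Equiv.Perm (Fin n)) (P : Fin n → Fin n → Prop)
    [∀ s v, Decidable (P s v)] :
    (univ.filter fun s => P s (w s)).card = (univ.filter fun v => P (w.symm v) v).card := by
  apply Finset.card_bij' (fun s _ => w s) (fun v _ => w.symm v) <;> simp

private lemma card_le_fin (n p : ℕ) (hp : p < n) :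
    (univ.filter fun s : Fin n => (s:ℕ) ≤ p).card = p + 1 := by
  have : (univ.filter fun s : Fin n => (s:ℕ) ≤ p) = Finset.Iic ⟨p, hp⟩ := by
    ext s; simp [Fin.le_def]
  rw [this, Fin.card_Iic]

/-- value form of the rank function -/
private lemma kfn_eq_kv {n : ℕ} (w : Equiv.Perm (Fin n)) (q p : ℕ) :
    kfn w q p = (univ.filter fun v : Fin n => q < (v:ℕ) ∧ (w.symm v:ℕ) ≤ p).card := by
  rw [kfn, filter_perm_card w (fun s v => (s:ℕ) ≤ p ∧ q < (v:ℕ))]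
  congr 1; ext v; simp [and_comm]

private lemma kfn_add_compl {n : ℕ} (w : Equiv.Perm (Fin n)) (q p : ℕ) (hp : p < n) :
    kfn w q p + (univ.filter fun v : Fin n => (v:ℕ) ≤ q ∧ (w.symm v:ℕ) ≤ p).card = p + 1 := by
  rw [kfn_eq_kv]
  rw [← Finset.card_union_of_disjoint (by rw [Finset.disjoint_left]; intro a; simp; omega)]
  have hu : ((univ.filter fun v : Fin n => q < (v:ℕ) ∧ (w.symm v:ℕ) ≤ p) ∪
      (univ.filter fun v : Fin n => (v:ℕ) ≤ q ∧ (w.symm v:ℕ) ≤ p)) =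
      univ.filter fun v : Fin n => (w.symm v:ℕ) ≤ p := by
    ext v; simp; omega
  rw [hu, ← filter_perm_card w (fun s _ => (s:ℕ) ≤ p)]
  exact card_le_fin n p hp

private lemma kfn_succ_right {n : ℕ} (w : Equiv.Perm (Fin n)) (q p : ℕ)
    (h : (q, p+1) ∈ rothe w) : kfn w q (p+1) = kfn w q p + 1 := by
  obtain ⟨hj, hq, -⟩ := h
  have key : (univ.filter fun s : Fin n => (s:ℕ) ≤ p+1 ∧ q < (w s:ℕ)) =
      insert ⟨p+1, hj⟩ (univ.filter fun s : Fin n => (s:ℕ) ≤ p ∧ q < (w s:ℕ)) := by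
    ext s
    simp only [mem_filter, mem_univ, true_and, mem_insert]
    constructor
    · rintro ⟨hs, hws⟩
      by_cases he : (s:ℕ) = p+1
      · left; exact Fin.ext he
      · right; exact ⟨by omega, hws⟩
    · rintro (rfl | ⟨hs, hws⟩)
      · exact ⟨le_refl _, hq⟩
      · exact ⟨by omega, hws⟩
  have hnm : (⟨p+1, hj⟩ : Fin n) ∉ (univ.filter fun s : Fin n => (s:ℕ) ≤ p ∧ q < (w s:ℕ)) := by
    simp only [mem_filter, mem_univ, true_and, not_and]
    intro hmem
    have : ((⟨p+1, hj⟩ : Fin n) : ℕ) = p + 1 := rfl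
    omega
  rw [kfn, kfn, key, Finset.card_insert_of_notMem hnm]

private lemma kfn_succ_left {n : ℕ} (w : Equiv.Perm (Fin n)) (q p : ℕ)
    (h : (q+1, p) ∈ rothe w) : kfn w (q+1) p = kfn w q p := by
  obtain ⟨hj, -, hi, hp⟩ := h
  rw [kfn, kfn]
  congr 1
  ext s
  simp only [mem_filter, mem_univ, true_and]
  constructor
  · rintro ⟨hs, hws⟩; exact ⟨hs, by omega⟩
  · rintro ⟨hs, hws⟩
    refine ⟨hs, ?_⟩
    have hne : (w s : ℕ) ≠ q + 1 := by
      intro he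
      have : w s = ⟨q+1, hi⟩ := Fin.ext he
      have h6 : s = w.symm ⟨q+1, hi⟩ := by rw [← this]; simp
      have h7 : (s:ℕ) = ((w.symm ⟨q+1, hi⟩ : Fin n) : ℕ) := by rw [h6]
      have hp2 : (p:ℕ) < ((w.symm ⟨q+1, hi⟩ : Fin n) : ℕ) := hp
      omega
    omega

private lemma kfn_mono_q {n : ℕ} (w : Equiv.Perm (Fin n)) {q Q : ℕ} (p : ℕ) (h : q ≤ Q) :
    kfn w Q p ≤ kfn w q p := by
  apply Finset.card_le_card
  intro s; simp only [mem_filter, mem_univ, true_and]; omega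

private lemma kfn_le_right {n : ℕ} (w : Equiv.Perm (Fin n)) (q : ℕ) {p P : ℕ} (h : p ≤ P) :
    kfn w q P + p ≤ kfn w q p + P := by
  have hsub : (univ.filter fun s : Fin n => (s:ℕ) ≤ P ∧ q < (w s:ℕ)) ⊆
      (univ.filter fun s : Fin n => (s:ℕ) ≤ p ∧ q < (w s:ℕ)) ∪
      (univ.filter fun s : Fin n => p < (s:ℕ) ∧ (s:ℕ) ≤ P) := by
    intro s; simp only [mem_union, mem_filter, mem_univ, true_and]; omega
  have h1 : kfn w q P ≤ kfn w q p +
      (univ.filter fun s : Fin n => p < (s:ℕ) ∧ (s:ℕ) ≤ P).card :=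
    le_trans (Finset.card_le_card hsub) (Finset.card_union_le _ _)
  have h2 : (univ.filter fun s : Fin n => p < (s:ℕ) ∧ (s:ℕ) ≤ P).card ≤ P - p := by
    have hc : ∀ a ∈ (univ.filter fun s : Fin n => p < (s:ℕ) ∧ (s:ℕ) ≤ P),
        (a:ℕ) ∈ Finset.Ioc p P := by
      intro a ha
      simp only [mem_filter, mem_univ, true_and] at ha
      exact Finset.mem_Ioc.2 ha
    have := Finset.card_le_card_of_injOn (fun s : Fin n => (s:ℕ)) hc
      (fun a _ b _ hab => Fin.ext hab)
    simpa using this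
  omega

/-- from any diagram box one can reach an essential box weakly to the SE,
with controlled rank. -/
private lemma reach {n : ℕ} (w : Equiv.Perm (Fin n)) :
    ∀ m q p, n - q + (n - p) ≤ m → (q, p) ∈ rothe w →
    ∃ Q P, (Q, P) ∈ essSet w ∧ q ≤ Q ∧ p ≤ P ∧ kfn w Q P + p = kfn w q p + P := by
  intro m
  induction m with
  | zero =>
    intro q p hm hr
    obtain ⟨hj, -, hi, -⟩ := hr
    omega
  | succ m ih =>
    intro q p hm hr
    obtain ⟨hj, -, hi, -⟩ := id hr
    by_cases hR : (q, p+1) ∈ rothe w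
    · obtain ⟨hj2, -⟩ := id hR
      obtain ⟨Q, P, he, hq, hp, hk⟩ := ih q (p+1) (by omega) hR
      have := kfn_succ_right w q p hR
      exact ⟨Q, P, he, hq, by omega, by omega⟩
    · by_cases hD : (q+1, p) ∈ rothe w
      · have hi2 : q + 1 < n := by
          obtain ⟨-, -, hi2, -⟩ := hD; exact hi2
        obtain ⟨Q, P, he, hq, hp, hk⟩ := ih (q+1) p (by omega) hD
        have := kfn_succ_left w q p hD
        exact ⟨Q, P, he, by omega, hp, by omega⟩
      · exact ⟨q, p, ⟨hr, hD, hR⟩, le_refl _, le_refl _, rfl⟩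

/-- the key step: a minimal disagreement of the inverses yields a contradiction. -/
private lemma key {n : ℕ} (w w' : Equiv.Perm (Fin n))
    (h1 : essSet w = essSet w')
    (h2 : ∀ b ∈ essSet w, kfn w b.1 b.2 = kfn w' b.1 b.2)
    (q : Fin n)
    (hmin : ∀ v : Fin n, (v:ℕ) < (q:ℕ) → w.symm v = w'.symm v)
    (hlt : (w.symm q : ℕ) < (w'.symm q : ℕ)) : False := by
  set p : Fin n := w.symm q with hp
  -- Step A : (q, p) ∈ rothe w'
  have hwp : (q:ℕ) < (w' p : ℕ) := by
    by_contra hle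
    push_neg at hle
    rcases Nat.lt_or_ge (w' p : ℕ) (q:ℕ) with hww | hww
    · have := hmin (w' p) hww
      have h3 : w.symm (w' p) = p := by rw [this]; simp
      have h4 : w p = w' p := by
        have := congrArg w h3
        simpa using this.symm
      have h5 : w p = q := by rw [hp]; simp
      rw [h5] at h4
      omega
    · have heq : w' p = q := Fin.ext (le_antisymm hle hww)
      have : w'.symm q = p := by rw [← heq]; simp
      omega
  have hbox : ((q:ℕ), (p:ℕ)) ∈ rothe w' := by
    refine ⟨p.isLt, ?_, q.isLt, ?_⟩
    · simpa using hwp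
    · simpa using hlt
  -- Step B : kfn w q p + 1 = kfn w' q p
  have hB : kfn w (q:ℕ) (p:ℕ) + 1 = kfn w' (q:ℕ) (p:ℕ) := by
    have hA := kfn_add_compl w (q:ℕ) (p:ℕ) p.isLt
    have hA' := kfn_add_compl w' (q:ℕ) (p:ℕ) p.isLt
    have hins : (univ.filter fun v : Fin n => (v:ℕ) ≤ (q:ℕ) ∧ (w.symm v:ℕ) ≤ (p:ℕ)) =
        insert q (univ.filter fun v : Fin n => (v:ℕ) ≤ (q:ℕ) ∧ (w'.symm v:ℕ) ≤ (p:ℕ)) := by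
      ext v
      simp only [mem_filter, mem_univ, true_and, mem_insert]
      constructor
      · rintro ⟨hv, hsv⟩
        by_cases he : (v:ℕ) = (q:ℕ)
        · left; exact Fin.ext he
        · right
          rw [← hmin v (by omega)]
          exact ⟨hv, hsv⟩
      · rintro (rfl | ⟨hv, hsv⟩)
        · exact ⟨le_refl _, by rw [← hp]⟩
        · have he : (v:ℕ) ≠ (q:ℕ) := by
            intro he
            have : v = q := Fin.ext he
            subst this
            omega
          rw [hmin v (by omega)]
          exact ⟨hv, hsv⟩
    have hnm : q ∉ (univ.filter fun v : Fin n => (v:ℕ) ≤ (q:ℕ) ∧ (w'.symm v:ℕ) ≤ (p:ℕ)) := by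
      simp only [mem_filter, mem_univ, true_and, not_and]
      intro
      omega
    rw [hins, Finset.card_insert_of_notMem hnm] at hA
    omega
  -- Step C : reach an essential box and derive the contradiction
  obtain ⟨Q, P, he, hq, hpP, hk⟩ :=
    reach w' (n - q + (n - p)) (q:ℕ) (p:ℕ) (le_refl _) hbox
  have heW : (Q, P) ∈ essSet w := h1 ▸ he
  have heq : kfn w Q P = kfn w' Q P := h2 (Q, P) heW
  have hM1 : kfn w (q:ℕ) P + (p:ℕ) ≤ kfn w (q:ℕ) (p:ℕ) + P := kfn_le_right w _ hpP
  have hM2 : kfn w Q P ≤ kfn w (q:ℕ) P := kfn_mono_q w P hq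
  omega

/-- A permutation is uniquely determined by its essential set together with the
values of its rank function on the essential set. -/
theorem stmt4 (n : ℕ) (w w' : Equiv.Perm (Fin n))
    (h1 : essSet w = essSet w')
    (h2 : ∀ b ∈ essSet w, kfn w b.1 b.2 = kfn w' b.1 b.2) :
    w = w' := by
  by_contra hne
  have hsne : w.symm ≠ w'.symm := by
    intro h
    apply hne
    have := congrArg Equiv.symm h
    simpa using this
  have hex : (univ.filter fun v : Fin n => w.symm v ≠ w'.symm v).Nonempty := by
    rw [Finset.filter_nonempty_iff]
    by_contra hc
    push_neg at hc
    exact hsne (Equiv.ext fun v => by simpa using hc v (mem_univ v))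
  set T := univ.filter fun v : Fin n => w.symm v ≠ w'.symm v with hT
  obtain ⟨q, hqT⟩ := hex
  -- take the minimal element
  set q0 := T.min' ⟨q, hqT⟩ with hq0
  have hq0T : q0 ∈ T := T.min'_mem _
  have hq0ne : w.symm q0 ≠ w'.symm q0 := by
    simpa [hT] using hq0T
  have hmin : ∀ v : Fin n, (v:ℕ) < (q0:ℕ) → w.symm v = w'.symm v := by
    intro v hv
    by_contra hvne
    have hvT : v ∈ T := by simpa [hT] using hvne
    have := T.min'_le v hvT
    rw [← hq0] at this
    exact absurd (lt_of_lt_of_le hv this) (lt_irrefl _)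
  have h1' : essSet w' = essSet w := h1.symm
  have h2' : ∀ b ∈ essSet w', kfn w' b.1 b.2 = kfn w b.1 b.2 := by
    intro b hb
    exact (h2 b (h1' ▸ hb)).symm
  rcases Nat.lt_or_ge (w.symm q0 : ℕ) (w'.symm q0 : ℕ) with hlt | hge
  · exact key w w' h1 h2 q0 hmin hlt
  · have hlt' : (w'.symm q0 : ℕ) < (w.symm q0 : ℕ) := by
      rcases Nat.lt_or_ge (w'.symm q0 : ℕ) (w.symm q0 : ℕ) with h | h
      · exact h
      · exact absurd (Fin.ext (le_antisymm h hge)) hq0ne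
    exact key w' w h1' h2' q0 (fun v hv => (hmin v hv).symm) hlt'
end

section
/- For permutations w, v in S_n, one has w ≤ v in Bruhat order if and only if k_w(q,p) ≤ k_v(q,p) for all (q,p) in Ess(w). -/
/-- The number of inversions (Coxeter length) of a permutation. -/
def invCount {n : ℕ} (u : Equiv.Perm (Fin n)) : ℕ :=
  (Finset.univ.filter (fun ij : Fin n × Fin n => ij.1 < ij.2 ∧ u ij.2 < u ij.1)).card

/-- Bruhat order on S_n: w ≤ v iff v is obtained from w by a chain of
right multiplications by transpositions, each increasing the length. -/
def bruhatLE {n : ℕ} (w v : Equiv.Perm (Fin n)) : Prop :=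
  Relation.ReflTransGen
    (fun u u' => (∃ a b : Fin n, a ≠ b ∧ u' = u * Equiv.swap a b) ∧ invCount u < invCount u')
    w v

/-!
First the tableau criterion: `bruhatLE w v` iff `kfn w ≤ kfn v` everywhere. Right multiplication
by the transposition of positions `a < b` with `u a < u b` raises `kfn u` by one exactly on the
rectangle `[u a, u b) × [a, b)` and raises the length; a length-raising transposition is always of
this kind, which gives one direction. Conversely, if `kfn w ≤ kfn v` and `w ≠ v`, let `i` be the
first position where they differ; then `w i < v i`, and swapping `i` with the first `j > i` such
that `w i < w j ≤ v i` keeps `kfn` below `kfn v` while raising `∑ kfn`.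

Then the reduction to `essSet w`. Inside the Rothe diagram, a step down leaves `kfn w` unchanged
and cannot raise `kfn v`, and a step right raises `kfn w` by exactly one and `kfn v` by at most
one, so the inequality at a box follows from the one at the next box towards a south-east corner.
Outside the diagram the same holds for steps left and up, which end on the border where
`kfn w ≤ kfn v` is automatic.
-/

open Finset Equiv

namespace Bruhat

variable {n : ℕ}

def kfnIco (u : Perm (Fin n)) (q lo hi : ℕ) : ℕ :=
  #{s : Fin n | lo ≤ (s : ℕ) ∧ (s : ℕ) < hi ∧ q < (u s : ℕ)}

section Counting

variable (u : Perm (Fin n))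

theorem kfn_eq_kfnIco (q p : ℕ) : kfn u q p = kfnIco u q 0 (p + 1) := by
  unfold kfn kfnIco
  congr 1
  refine filter_congr fun s _ => ?_
  omega

theorem kfnIco_add_kfnIco (q : ℕ) {lo mid hi : ℕ} (h₁ : lo ≤ mid) (h₂ : mid ≤ hi) :
    kfnIco u q lo mid + kfnIco u q mid hi = kfnIco u q lo hi := by
  unfold kfnIco
  rw [← card_union_of_disjoint (disjoint_filter.2 fun s _ hs hs' => by omega)]
  congr 1
  ext s
  simp only [mem_union, mem_filter, mem_univ, true_and]
  omega

theorem kfnIco_le_kfnIco {q Q : ℕ} (h : q ≤ Q) (lo hi : ℕ) :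
    kfnIco u Q lo hi ≤ kfnIco u q lo hi :=
  card_le_card <| monotone_filter_right _ fun s hs => by omega

theorem kfnIco_lt_kfnIco {q Q lo hi : ℕ} (t : Fin n) (hlo : lo ≤ t) (hhi : t < hi)
    (hq : q < u t) (hQ : u t ≤ Q) : kfnIco u Q lo hi < kfnIco u q lo hi := by
  refine card_lt_card ((ssubset_iff_of_subset (monotone_filter_right _ fun s hs => by omega)).2
    ⟨t, ?_, ?_⟩)
  · simp only [mem_filter, mem_univ, true_and]
    omega
  · simp only [mem_filter, mem_univ, true_and, not_and, not_lt]
    omega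

theorem kfnIco_eq_zero {q lo hi : ℕ} (h : ∀ s : Fin n, lo ≤ s → s < hi → u s ≤ q) :
    kfnIco u q lo hi = 0 :=
  card_eq_zero.2 <| filter_eq_empty_iff.2 fun s _ hs => by
    have := h s hs.1 hs.2.1
    omega

theorem kfnIco_succ_le_one (q lo : ℕ) : kfnIco u q lo (lo + 1) ≤ 1 :=
  card_le_one.2 fun s hs t ht => by
    simp only [mem_filter, mem_univ, true_and] at hs ht
    exact Fin.ext (by omega)

theorem kfnIco_succ_eq_one {q lo : ℕ} (h : lo < n) (hq : q < u ⟨lo, h⟩) :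
    kfnIco u q lo (lo + 1) = 1 :=
  (kfnIco_succ_le_one u q lo).antisymm <| card_pos.2 ⟨⟨lo, h⟩, by simpa using hq⟩

theorem kfnIco_congr {u' : Perm (Fin n)} {lo hi : ℕ}
    (h : ∀ s : Fin n, lo ≤ s → s < hi → u s = u' s) (q : ℕ) :
    kfnIco u q lo hi = kfnIco u' q lo hi := by
  unfold kfnIco
  congr 1
  refine filter_congr fun s _ => ?_
  by_cases hs : lo ≤ (s : ℕ) ∧ (s : ℕ) < hi
  · rw [h s hs.1 hs.2]
  · tauto

theorem kfn_add_kfnIco (q : ℕ) {p p' : ℕ} (h : p ≤ p') :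
    kfn u q p + kfnIco u q (p + 1) (p' + 1) = kfn u q p' := by
  rw [kfn_eq_kfnIco, kfn_eq_kfnIco, kfnIco_add_kfnIco u q (Nat.zero_le _) (by omega)]

theorem kfn_le_kfn_left {q q' : ℕ} (h : q ≤ q') (p : ℕ) : kfn u q' p ≤ kfn u q p := by
  simpa only [kfn_eq_kfnIco] using kfnIco_le_kfnIco u h 0 (p + 1)

/-- For `r = q + 1` the left-hand side is `kfn u q p` by definition. -/
theorem card_le_apply_eq_kfn_add (r : Fin n) (p : ℕ) :
    #{s : Fin n | (s : ℕ) ≤ p ∧ (r : ℕ) ≤ u s} =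
      kfn u r p + if (u.symm r : ℕ) ≤ p then 1 else 0 := by
  unfold kfn
  split_ifs with hr
  · rw [← card_insert_of_notMem (s := filter _ _) (a := u.symm r) (by simp)]
    congr 1
    ext s
    simp only [mem_filter, mem_univ, true_and, mem_insert]
    constructor
    · rintro ⟨hs, hrs⟩
      rcases hrs.lt_or_eq with hlt | heq
      · exact Or.inr ⟨hs, hlt⟩
      · exact Or.inl (u.eq_symm_apply.2 (Fin.ext heq.symm))
    · rintro (rfl | ⟨hs, hrs⟩)
      · simpa using hr
      · exact ⟨hs, hrs.le⟩
  · rw [add_zero]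
    congr 1
    refine filter_congr fun s _ => ⟨fun ⟨hs, hrs⟩ => ⟨hs, hrs.lt_of_ne fun heq => ?_⟩,
      fun ⟨hs, hrs⟩ => ⟨hs, hrs.le⟩⟩
    rw [show r = u s from Fin.ext heq, symm_apply_apply] at hr
    exact hr hs

theorem kfn_add_kfn_lt_kfn_add_kfn (t : Fin n) {q q' p p' : ℕ} (hp : p < t) (hp' : t ≤ p')
    (hq : q < u t) (hq' : u t ≤ q') : kfn u q' p' + kfn u q p < kfn u q p' + kfn u q' p := by
  have hsplit := kfn_add_kfnIco u q (p := p) (p' := p') (by omega)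
  have hsplit' := kfn_add_kfnIco u q' (p := p) (p' := p') (by omega)
  have := kfnIco_lt_kfnIco u t (lo := p + 1) (hi := p' + 1) (by omega) (by omega) hq hq'
  omega

end Counting

theorem sum_univ_eq_add_add_sum_sdiff {α M : Type*} [Fintype α] [DecidableEq α] [AddCommMonoid M]
    {a b : α} (h : a ≠ b) (f : α → M) :
    ∑ x, f x = f a + f b + ∑ x ∈ univ \ {a, b}, f x := by
  rw [← sum_pair h, add_comm, sum_sdiff (subset_univ _)]

section Swap

variable (u : Perm (Fin n)) {a b : Fin n}

theorem kfn_mul_swap (hab : a < b) (hval : u a < u b) (q p : ℕ) :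
    kfn (u * swap a b) q p =
      kfn u q p + if (u a : ℕ) ≤ q ∧ q < (u b : ℕ) ∧ (a : ℕ) ≤ p ∧ p < b then 1 else 0 := by
  have hrest : ∑ s ∈ univ \ {a, b}, (if (s : ℕ) ≤ p ∧ q < ((u * swap a b) s : ℕ) then 1 else 0) =
      ∑ s ∈ univ \ {a, b}, (if (s : ℕ) ≤ p ∧ q < (u s : ℕ) then 1 else 0) :=
    sum_congr rfl fun s hs => by
      have hs' : swap a b s = s := swap_apply_of_ne_of_ne (by simp_all) (by simp_all)
      simp only [Perm.mul_apply, hs']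
  rw [kfn, kfn, card_filter, card_filter, sum_univ_eq_add_add_sum_sdiff hab.ne,
    sum_univ_eq_add_add_sum_sdiff hab.ne, hrest]
  simp only [Perm.mul_apply, swap_apply_left, swap_apply_right]
  split_ifs <;> omega

theorem invCount_eq_sum_kfn : invCount u = ∑ t, kfn u (u t) t := by
  rw [invCount, card_filter, Fintype.sum_prod_type_right]
  refine sum_congr rfl fun t _ => ?_
  rw [kfn, card_filter]
  refine sum_congr rfl fun s _ => ?_
  congr 1
  refine propext ⟨fun h => ⟨h.1.le, h.2⟩, fun h => ⟨?_, h.2⟩⟩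
  have hst : s ≠ t := by
    rintro rfl
    exact lt_irrefl _ h.2
  exact Fin.lt_def.2 (lt_of_le_of_ne h.1 (Fin.val_ne_of_ne hst))

theorem invCount_lt_invCount_mul_swap (hab : a < b) (hval : u a < u b) :
    invCount u < invCount (u * swap a b) := by
  rw [invCount_eq_sum_kfn, invCount_eq_sum_kfn, sum_univ_eq_add_add_sum_sdiff hab.ne,
    sum_univ_eq_add_add_sum_sdiff hab.ne]
  have hrest : ∑ t ∈ univ \ {a, b}, kfn u (u t) t ≤
      ∑ t ∈ univ \ {a, b}, kfn (u * swap a b) ((u * swap a b) t) t :=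
    sum_le_sum fun t ht => by
      rw [Perm.mul_apply, swap_apply_of_ne_of_ne (by simp_all) (by simp_all),
        kfn_mul_swap u hab hval]
      exact Nat.le_add_right _ _
  have ha : kfn (u * swap a b) ((u * swap a b) a) a = kfn u (u b) a := by
    rw [Perm.mul_apply, swap_apply_left, kfn_mul_swap u hab hval, if_neg (by omega), add_zero]
  have hb : kfn (u * swap a b) ((u * swap a b) b) b = kfn u (u a) b := by
    rw [Perm.mul_apply, swap_apply_right, kfn_mul_swap u hab hval, if_neg (by omega), add_zero]
  have := kfn_add_kfn_lt_kfn_add_kfn u b hab le_rfl hval le_rfl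
  omega

theorem kfn_le_kfn_mul_swap_of_invCount_lt (hab : a ≠ b)
    (h : invCount u < invCount (u * swap a b)) (q p : ℕ) :
    kfn u q p ≤ kfn (u * swap a b) q p := by
  wlog hlt : a < b generalizing a b
  · rw [swap_comm] at h ⊢
    exact this hab.symm h (lt_of_le_of_ne (not_lt.1 hlt) hab.symm)
  rcases lt_or_gt_of_ne (u.injective.ne hab) with hval | hval
  · rw [kfn_mul_swap u hlt hval]
    exact Nat.le_add_right _ _
  · have := invCount_lt_invCount_mul_swap (u * swap a b) hlt (by simpa using hval)
    rw [mul_swap_mul_self] at this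
    exact absurd h (lt_asymm this)

end Swap

theorem kfn_le_kfn_of_bruhatLE {w v : Perm (Fin n)} (h : bruhatLE w v) (q p : ℕ) :
    kfn w q p ≤ kfn v q p := by
  induction h with
  | refl => exact le_rfl
  | tail _ step ih =>
    obtain ⟨⟨a, b, hab, rfl⟩, hinv⟩ := step
    exact ih.trans (kfn_le_kfn_mul_swap_of_invCount_lt _ hab hinv q p)

section FirstDifference

variable {w v : Perm (Fin n)} {i : Fin n}

theorem kfn_add_kfnIco_eq_of_eqOn_lt (hagree : ∀ s < i, w s = v s) {p : ℕ} (hp : i ≤ p + 1)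
    (q : ℕ) : kfn w q p + kfnIco v q i (p + 1) = kfn v q p + kfnIco w q i (p + 1) := by
  rw [kfn_eq_kfnIco, kfn_eq_kfnIco, ← kfnIco_add_kfnIco w q (Nat.zero_le _) hp,
    ← kfnIco_add_kfnIco v q (Nat.zero_le _) hp,
    kfnIco_congr w (fun s _ hs => hagree s hs) q]
  omega

variable (hle : ∀ q p, kfn w q p ≤ kfn v q p) (hagree : ∀ s < i, w s = v s)
include hle hagree

theorem apply_lt_apply_of_eqOn_lt (hne : w i ≠ v i) : w i < v i := by
  by_contra hge
  have hlt : v i < w i := lt_of_le_of_ne (not_lt.1 hge) hne.symm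
  have key := kfn_add_kfnIco_eq_of_eqOn_lt hagree (p := i) (by omega) (v i)
  rw [kfnIco_eq_zero v fun s h₁ h₂ => by rw [show s = i from Fin.ext (by omega)],
    kfnIco_succ_eq_one w i.isLt (by simpa using hlt)] at key
  have := hle (v i) i
  omega

theorem kfn_lt_kfn_of_eqOn_lt {j : Fin n} (hj : w j ≤ v i)
    (hmin : ∀ t, i < t → t < j → w i < w t → v i < w t) {q p : ℕ}
    (hq : w i ≤ q) (hq' : q < w j) (hp : i ≤ p) (hp' : p < j) : kfn w q p < kfn v q p := by
  -- by minimality of `j`, no value of `w` on `(i, p]` lies in `(w i, v i]`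
  have hwindow : kfnIco w q i (p + 1) = kfnIco w (v i) i (p + 1) := by
    unfold kfnIco
    congr 1
    refine filter_congr fun s _ => and_congr_right fun hs => and_congr_right fun hs' =>
      ⟨fun hqs => ?_, fun hs'' => by omega⟩
    have his : i < s := lt_of_le_of_ne (Fin.le_def.2 hs) (by rintro rfl; omega)
    exact hmin s his (by omega) (by omega)
  have hsplit_q := kfn_add_kfnIco_eq_of_eqOn_lt hagree (p := p) (by omega) q
  have hsplit_Q := kfn_add_kfnIco_eq_of_eqOn_lt hagree (p := p) (by omega) (v i)
  have hv := kfnIco_lt_kfnIco v i (lo := i) (hi := p + 1) le_rfl (by omega)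
    (by omega : q < v i) le_rfl
  have := hle (v i) p
  omega

theorem kfn_mul_swap_le_of_eqOn_lt {j : Fin n} (hij : i < j) (hval : w i < w j)
    (hj : w j ≤ v i) (hmin : ∀ t, i < t → t < j → w i < w t → v i < w t) (q p : ℕ) :
    kfn (w * swap i j) q p ≤ kfn v q p := by
  rw [kfn_mul_swap w hij hval]
  split_ifs with h
  · exact kfn_lt_kfn_of_eqOn_lt hle hagree hj hmin h.1 h.2.1 h.2.2.1 h.2.2.2
  · exact hle q p

end FirstDifference

theorem exists_mul_swap_le {w v : Perm (Fin n)} (hle : ∀ q p, kfn w q p ≤ kfn v q p)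
    (hwv : w ≠ v) :
    ∃ a b : Fin n, a < b ∧ w a < w b ∧ ∀ q p, kfn (w * swap a b) q p ≤ kfn v q p := by
  obtain ⟨i, hi⟩ := exists_minimal_of_wellFoundedLT (fun s => w s ≠ v s)
    (by by_contra! h; exact hwv (Equiv.ext h))
  have hagree : ∀ s < i, w s = v s := fun s hs => not_not.1 fun h => hi.not_lt h hs
  have hlt := apply_lt_apply_of_eqOn_lt hle hagree hi.prop
  have hpos : i < w.symm (v i) := by
    refine lt_of_le_of_ne (not_lt.1 fun h => ?_) fun h => hi.prop ?_
    · have := hagree _ h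
      rw [apply_symm_apply, v.injective.eq_iff] at this
      rw [← this] at h
      exact lt_irrefl _ h
    · rw [← w.apply_symm_apply (v i), ← h]
  obtain ⟨j, hj⟩ := exists_minimal_of_wellFoundedLT (fun t => i < t ∧ w i < w t ∧ w t ≤ v i)
    ⟨w.symm (v i), hpos, by simpa using hlt, by simp⟩
  exact ⟨i, j, hj.prop.1, hj.prop.2.1, kfn_mul_swap_le_of_eqOn_lt hle hagree hj.prop.1
    hj.prop.2.1 hj.prop.2.2 fun t hit htj hwt => not_le.1 fun h => hj.not_lt ⟨hit, hwt, h⟩ htj⟩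

def kfnSum (u : Perm (Fin n)) : ℕ :=
  ∑ x ∈ range n ×ˢ range n, kfn u x.1 x.2

theorem kfnSum_le_kfnSum {u u' : Perm (Fin n)} (h : ∀ q p, kfn u q p ≤ kfn u' q p) :
    kfnSum u ≤ kfnSum u' :=
  sum_le_sum fun x _ => h x.1 x.2

theorem kfnSum_lt_kfnSum_mul_swap (u : Perm (Fin n)) {a b : Fin n} (hab : a < b)
    (hval : u a < u b) : kfnSum u < kfnSum (u * swap a b) := by
  refine sum_lt_sum (fun x _ => ?_) ⟨(u a, a), by simp, ?_⟩
  · rw [kfn_mul_swap u hab hval]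
    exact Nat.le_add_right _ _
  · rw [kfn_mul_swap u hab hval, if_pos ⟨le_rfl, hval, le_rfl, hab⟩]
    exact Nat.lt_succ_self _

theorem bruhatLE_of_kfn_le {w v : Perm (Fin n)} (hle : ∀ q p, kfn w q p ≤ kfn v q p) :
    bruhatLE w v := by
  by_cases hwv : w = v
  · exact hwv ▸ .refl
  obtain ⟨a, b, hab, hval, hle'⟩ := exists_mul_swap_le hle hwv
  have := kfnSum_lt_kfnSum_mul_swap w hab hval
  have := kfnSum_le_kfnSum hle'
  exact .head ⟨⟨a, b, hab.ne, rfl⟩, invCount_lt_invCount_mul_swap w hab hval⟩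
    (bruhatLE_of_kfn_le hle')
termination_by kfnSum v - kfnSum w

theorem bruhatLE_iff_forall_kfn_le {w v : Perm (Fin n)} :
    bruhatLE w v ↔ ∀ q p, kfn w q p ≤ kfn v q p :=
  ⟨kfn_le_kfn_of_bruhatLE, bruhatLE_of_kfn_le⟩

section Essential

variable {w v : Perm (Fin n)}

theorem kfn_le_kfn_of_mem_rothe (hess : ∀ b ∈ essSet w, kfn w b.1 b.2 ≤ kfn v b.1 b.2)
    (q p : ℕ) (hr : (q, p) ∈ rothe w) : kfn w q p ≤ kfn v q p := by
  by_cases hdown : (q + 1, p) ∈ rothe w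
  · obtain ⟨-, -, hq, hpos⟩ := id hdown
    have ih := kfn_le_kfn_of_mem_rothe hess (q + 1) p hdown
    have hw := card_le_apply_eq_kfn_add w ⟨q + 1, hq⟩ p
    rw [if_neg (by simpa using hpos)] at hw
    have := kfn_le_kfn_left v (q.le_add_right 1) p
    exact (hw.trans_le ih).trans this
  by_cases hright : (q, p + 1) ∈ rothe w
  · obtain ⟨hp, hq, -⟩ := id hright
    have ih := kfn_le_kfn_of_mem_rothe hess q (p + 1) hright
    have hw := kfn_add_kfnIco w q (p.le_add_right 1)
    have hv := kfn_add_kfnIco v q (p.le_add_right 1)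
    rw [kfnIco_succ_eq_one w hp hq] at hw
    have := kfnIco_succ_le_one v q (p + 1)
    omega
  exact hess (q, p) ⟨hr, hdown, hright⟩
termination_by 2 * n - (q + p)
decreasing_by all_goals omega

theorem kfn_le_kfn_of_forall_mem_rothe (hD : ∀ q p, (q, p) ∈ rothe w → kfn w q p ≤ kfn v q p)
    (q p : ℕ) : kfn w q p ≤ kfn v q p := by
  by_cases hr : (q, p) ∈ rothe w
  · exact hD q p hr
  by_cases hcol : ∃ hp : p < n, q < w ⟨p, hp⟩
  · obtain ⟨hp, hq⟩ := hcol
    have hqn : q < n := hq.trans (w _).isLt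
    have hpos : (w.symm ⟨q, hqn⟩ : ℕ) ≤ p := not_lt.1 fun h => hr ⟨hp, hq, hqn, h⟩
    have hw := card_le_apply_eq_kfn_add w ⟨q, hqn⟩ p
    have hv := card_le_apply_eq_kfn_add v ⟨q, hqn⟩ p
    rw [if_pos hpos] at hw
    dsimp only at hw hv
    have hcard : #{s : Fin n | (s : ℕ) ≤ p ∧ q ≤ w s} ≤ #{s : Fin n | (s : ℕ) ≤ p ∧ q ≤ v s} := by
      cases q with
      | zero => simp
      | succ r => exact kfn_le_kfn_of_forall_mem_rothe hD r p
    split_ifs at hv <;> omega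
  · have hcol' : ∀ s : Fin n, (s : ℕ) = p → (w s : ℕ) ≤ q := fun s hs => by
      subst hs
      push Not at hcol
      exact hcol s.isLt
    cases p with
    | zero =>
      rw [kfn_eq_kfnIco, kfnIco_eq_zero w fun s _ hs => hcol' s (by omega)]
      exact Nat.zero_le _
    | succ p =>
      have hw := kfn_add_kfnIco w q (p.le_add_right 1)
      have hv := kfn_add_kfnIco v q (p.le_add_right 1)
      rw [kfnIco_eq_zero w fun s hs hs' => hcol' s (by omega)] at hw
      have := kfn_le_kfn_of_forall_mem_rothe hD q p
      omega
termination_by q + p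

end Essential

end Bruhat

/-- w ≤ v in Bruhat order iff k_w ≤ k_v on the essential set of w. -/
theorem stmt5 (n : ℕ) (w v : Equiv.Perm (Fin n)) :
    bruhatLE w v ↔ ∀ b ∈ essSet w, kfn w b.1 b.2 ≤ kfn v b.1 b.2 := by
  rw [Bruhat.bruhatLE_iff_forall_kfn_le]
  exact ⟨fun h b _ => h b.1 b.2, fun h => Bruhat.kfn_le_kfn_of_forall_mem_rothe
    (Bruhat.kfn_le_kfn_of_mem_rothe h)⟩
end

section
/- Let w in S_n be vexillary with essential boxes e_i = (q_i, p_i) ordered so that p_1 ≤ ... ≤ p_s and q_1 ≥ ... ≥ q_s, and set k_i = k_w(q_i, p_i). Then 0 ≤ k_1 < k_2 < ... < k_s ≤ n, and q_i - p_i + k_i > q_{i+1} - p_{i+1} + k_{i+1} for 1 ≤ i ≤ s-1, and q_s - p_s + k_s > 0. -/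
/-- w avoids the pattern 2143. -/
def Vexillary {n : ℕ} (w : Equiv.Perm (Fin n)) : Prop :=
  ¬ ∃ a b c d : Fin n, a < b ∧ b < c ∧ c < d ∧ w b < w a ∧ w a < w d ∧ w d < w c

/-!
The quantity `q - p + k_w(q, p)` is the number of dots of `w` in columns `> p` and rows `≤ q`:
there are `q + 1` dots in rows `≤ q` and `p + 1` in columns `≤ p`, and `k_w(q, p)` of the latter
lie below row `q`. Both this count and `k_w` are monotone along the south-west to north-east order,
and the corner conditions of an essential box `(q, p)` make them strict: the dot in row `q + 1`
lies weakly west of column `p`, and the dot in column `p + 1` lies weakly north of row `q`.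
-/

open Finset

theorem Finset.card_filter_lt_card_filter {α : Type*} [Fintype α] {P Q : α → Prop}
    [DecidablePred P] [DecidablePred Q] (hPQ : ∀ x, P x → Q x) {x : α} (hQ : Q x)
    (hP : ¬ P x) : #{y | P y} < #{y | Q y} := by
  refine card_lt_card ((ssubset_iff_of_subset fun y => ?_).2 ⟨x, ?_, ?_⟩) <;> simp_all

section Rothe

variable {n : ℕ} {w : Equiv.Perm (Fin n)} {q p q' p' : ℕ}

theorem mem_rothe_iff :
    (q, p) ∈ rothe w ↔
      (∃ a : Fin n, (a : ℕ) = p ∧ q < w a) ∧ ∃ b : Fin n, (w b : ℕ) = q ∧ p < b := by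
  constructor
  · rintro ⟨hp, hqa, hq, hpb⟩
    exact ⟨⟨⟨p, hp⟩, rfl, hqa⟩, ⟨w.symm ⟨q, hq⟩, by simp, hpb⟩⟩
  · rintro ⟨⟨a, rfl, hqa⟩, ⟨b, rfl, hpb⟩⟩
    exact ⟨a.isLt, hqa, (w b).isLt, by simpa using hpb⟩

theorem exists_val_eq_succ_apply_le_of_mem_essSet (h : (q, p) ∈ essSet w) :
    ∃ a : Fin n, (a : ℕ) = p + 1 ∧ (w a : ℕ) ≤ q := by
  obtain ⟨⟨_, b, hbq, hpb⟩, -, hright⟩ := h.imp_left mem_rothe_iff.1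
  let a : Fin n := ⟨p + 1, by omega⟩
  refine ⟨a, rfl, not_lt.1 fun hqa => hright (mem_rothe_iff.2 ⟨⟨a, rfl, hqa⟩, b, hbq, ?_⟩)⟩
  have : a ≠ b := fun hab => by rw [← hab] at hbq; omega
  exact lt_of_le_of_ne (Nat.succ_le_of_lt hpb) (Fin.val_ne_of_ne this)

theorem exists_val_le_apply_eq_succ_of_mem_essSet (h : (q, p) ∈ essSet w) :
    ∃ t : Fin n, (t : ℕ) ≤ p ∧ (w t : ℕ) = q + 1 := by
  obtain ⟨⟨⟨a, rfl, hqa⟩, -⟩, hbelow, -⟩ := h.imp_left mem_rothe_iff.1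
  rcases (Nat.succ_le_of_lt hqa).eq_or_lt with hqa' | hqa'
  · exact ⟨a, le_rfl, hqa'.symm⟩
  · let b := w.symm ⟨q + 1, hqa'.trans (w a).isLt⟩
    refine ⟨b, not_lt.1 fun hab => hbelow ?_, by simp [b]⟩
    exact mem_rothe_iff.2 ⟨⟨a, rfl, hqa'⟩, b, by simp [b], hab⟩

end Rothe

theorem Fin.card_filter_val_le {n p : ℕ} (hp : p < n) : #{t : Fin n | (t : ℕ) ≤ p} = p + 1 := by
  simpa [Nat.lt_succ_iff, hp] using Fin.card_filter_val_lt (n := n) (m := p + 1)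

theorem Equiv.Perm.card_filter_apply_val_le {n q : ℕ} (w : Equiv.Perm (Fin n)) (hq : q < n) :
    #{t | (w t : ℕ) ≤ q} = q + 1 := by
  rw [card_equiv w (t := {v : Fin n | (v : ℕ) ≤ q}) (by simp), Fin.card_filter_val_le hq]

theorem kfn_le {n : ℕ} (w : Equiv.Perm (Fin n)) (q p : ℕ) : kfn w q p ≤ n :=
  (card_filter_le _ _).trans (card_univ.trans (Fintype.card_fin n)).le

def neCount {n : ℕ} (w : Equiv.Perm (Fin n)) (q p : ℕ) : ℕ :=
  #{t : Fin n | p < t ∧ (w t : ℕ) ≤ q}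

section Counting

variable {n : ℕ} {w : Equiv.Perm (Fin n)} {q p q' p' : ℕ}

theorem kfn_lt_kfn_of_mem_essSet (hne : (q, p) ≠ (q', p')) (hp : p ≤ p') (hq : q' ≤ q)
    (h' : (q', p') ∈ essSet w) : kfn w q p < kfn w q' p' := by
  have hmono : ∀ t : Fin n, (t ≤ p ∧ q < w t) → (t ≤ p' ∧ q' < w t) :=
    fun t ht => ⟨ht.1.trans hp, hq.trans_lt ht.2⟩
  rcases hq.lt_or_eq with hq | rfl
  · obtain ⟨t, htp, hwt⟩ := exists_val_le_apply_eq_succ_of_mem_essSet h'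
    exact card_filter_lt_card_filter hmono ⟨htp, by omega⟩ (by omega)
  · obtain ⟨⟨a, rfl, hqa⟩, -⟩ := mem_rothe_iff.1 h'.1
    have : p < a := hp.lt_of_ne fun h => hne (by rw [h])
    exact card_filter_lt_card_filter hmono ⟨le_rfl, hqa⟩ (by omega)

theorem neCount_eq (hp : p < n) (hq : q < n) :
    (neCount w q p : ℤ) = q - p + kfn w q p := by
  have hcol : kfn w q p + #{t : Fin n | t ≤ p ∧ (w t : ℕ) ≤ q} = p + 1 := by
    simpa only [kfn, filter_filter, not_lt, Fin.card_filter_val_le hp] using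
      card_filter_add_card_filter_not (s := {t : Fin n | (t : ℕ) ≤ p}) fun t => q < (w t : ℕ)
  have hrow : neCount w q p + #{t : Fin n | t ≤ p ∧ (w t : ℕ) ≤ q} = q + 1 := by
    simpa only [neCount, filter_filter, not_lt, and_comm, w.card_filter_apply_val_le hq] using
      card_filter_add_card_filter_not (s := {t | (w t : ℕ) ≤ q}) fun t : Fin n => p < (t : ℕ)
  omega

theorem neCount_pos_of_mem_rothe (h : (q, p) ∈ rothe w) : 0 < neCount w q p := by
  obtain ⟨-, b, hbq, hpb⟩ := mem_rothe_iff.1 h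
  exact card_pos.2 ⟨b, by simp [hpb, hbq]⟩

theorem neCount_lt_neCount_of_mem_essSet (h : (q, p) ∈ essSet w) (hne : (q, p) ≠ (q', p'))
    (hp : p ≤ p') (hq : q' ≤ q) : neCount w q' p' < neCount w q p := by
  have hmono : ∀ t : Fin n, (p' < t ∧ (w t : ℕ) ≤ q') → (p < t ∧ (w t : ℕ) ≤ q) :=
    fun t ht => ⟨hp.trans_lt ht.1, ht.2.trans hq⟩
  rcases hq.lt_or_eq with hq | rfl
  · obtain ⟨-, b, hbq, hpb⟩ := mem_rothe_iff.1 h.1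
    exact card_filter_lt_card_filter hmono ⟨hpb, hbq.le⟩ (by omega)
  · obtain ⟨a, ha, hwa⟩ := exists_val_eq_succ_apply_le_of_mem_essSet h
    have : p < p' := hp.lt_of_ne fun h => hne (by rw [h])
    exact card_filter_lt_card_filter hmono ⟨by omega, hwa⟩ (by omega)

end Counting

/-- Boxes are 0-indexed: the paper's `(q, p)` is `((e i).1 + 1, (e i).2 + 1)`, and `q - p + k`
is unchanged by the shift. -/
theorem stmt6_general (n s : ℕ) (w : Equiv.Perm (Fin n))
    (e : Fin s → ℕ × ℕ) (hinj : Function.Injective e)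
    (hrange : Set.range e = essSet w)
    (hp : Monotone fun i => (e i).2) (hq : Antitone fun i => (e i).1) :
    (∀ i j : Fin s, i < j → kfn w (e i).1 (e i).2 < kfn w (e j).1 (e j).2) ∧
    (∀ i : Fin s, kfn w (e i).1 (e i).2 ≤ n) ∧
    (∀ i j : Fin s, i < j →
      ((e j).1 : ℤ) - (e j).2 + kfn w (e j).1 (e j).2
        < ((e i).1 : ℤ) - (e i).2 + kfn w (e i).1 (e i).2) ∧
    (∀ i : Fin s, 0 < ((e i).1 : ℤ) - (e i).2 + kfn w (e i).1 (e i).2) := by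
  have hess : ∀ i, e i ∈ essSet w := fun i => hrange ▸ Set.mem_range_self i
  have hne : ∀ i j : Fin s, i < j → e i ≠ e j := fun i j hij => hinj.ne hij.ne
  have hneCount : ∀ i,
      (neCount w (e i).1 (e i).2 : ℤ) = (e i).1 - (e i).2 + kfn w (e i).1 (e i).2 :=
    fun i => let ⟨hpn, _, hqn, _⟩ := (hess i).1; neCount_eq hpn hqn
  refine ⟨fun i j hij => kfn_lt_kfn_of_mem_essSet (hne i j hij) (hp hij.le) (hq hij.le) (hess j),
    fun i => kfn_le w _ _, fun i j hij => ?_, fun i => ?_⟩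
  · rw [← hneCount, ← hneCount]
    exact_mod_cast neCount_lt_neCount_of_mem_essSet (hess i) (hne i j hij) (hp hij.le) (hq hij.le)
  · rw [← hneCount]
    exact_mod_cast neCount_pos_of_mem_rothe (hess i).1

/-- If w is vexillary and its essential boxes e_i = (q_i, p_i) are enumerated
south-west to north-east (weakly increasing columns p, weakly decreasing rows q),
with k_i = k_w(q_i,p_i), then: k is strictly increasing with k_i ≤ n, the numbers
q_i − p_i + k_i are strictly decreasing, and q_s − p_s + k_s > 0.
(Boxes are 0-indexed: the paper's (q,p) is our ((e i).1 + 1, (e i).2 + 1), and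
q − p + k is unchanged by this shift.) -/
theorem stmt6 (n s : ℕ) (w : Equiv.Perm (Fin n)) (hvex : Vexillary w)
    (e : Fin s → ℕ × ℕ) (hinj : Function.Injective e)
    (hrange : Set.range e = essSet w)
    (hp : Monotone fun i => (e i).2) (hq : Antitone fun i => (e i).1) :
    (∀ i j : Fin s, i < j → kfn w (e i).1 (e i).2 < kfn w (e j).1 (e j).2) ∧
    (∀ i : Fin s, kfn w (e i).1 (e i).2 ≤ n) ∧
    (∀ i j : Fin s, i < j →
      ((e j).1 : ℤ) - (e j).2 + kfn w (e j).1 (e j).2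
        < ((e i).1 : ℤ) - (e i).2 + kfn w (e i).1 (e i).2) ∧
    (∀ i : Fin s, 0 < ((e i).1 : ℤ) - (e i).2 + kfn w (e i).1 (e i).2) :=
  stmt6_general n s w e hinj hrange hp hq
end

section
/- Let X_v° be the matrix Schubert cell for v in S_n (matrices with 1 in positions (v(j), j), free entries in positions (i,j) with v(j) > i and v^{-1}(i) > j, and 0 elsewhere). Fix a vexillary weak triple with p_1 ≤ ... ≤ p_s, q_1 ≥ ... ≥ q_s, and k'_i = k_v(q_i, p_i), and let μ be defined by μ_{k'_i} = q_i - p_i + k'_i (filled in minimally). Label free entries as in the paper: for i = 1,...,s, label 'i' each previously unlabelled free entry in the northwest q_i × p_i submatrix having no pivot 1 in its row or column within that submatrix. Then the total number of labelled entries equals |μ| = Σ_k μ_k. -/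
lemma stmt8_card_filter_lt (n m : ℕ) (h : m ≤ n) :
    (Finset.univ.filter (fun a : Fin n => (a:ℕ) < m)).card = m := by
  rw [show (Finset.univ.filter (fun a : Fin n => (a:ℕ) < m))
      = Finset.map (Fin.castLEEmb h) Finset.univ from ?_]
  · simp
  · ext a
    simp only [Finset.mem_filter, Finset.mem_univ, true_and, Finset.mem_map]
    constructor
    · intro ha; exact ⟨⟨a, ha⟩, rfl⟩
    · rintro ⟨b, rfl⟩; exact b.isLt

/-- Lemma 6.3 of the paper (type A label count).  Matrix representatives of the
Schubert cell X_v° (0-indexed) have a pivot 1 at (v j, j) and a free entry at (a,b)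
iff a < v b and b < v⁻¹ a.  Given a vexillary weak triple with column sizes
p_1 ≤ ... ≤ p_s, row sizes q_1 ≥ ... ≥ q_s (1-indexed sizes, indexed by i ∈ [1,s]),
and k'_i = k_v(q_i,p_i) = #{columns t < p_i with pivot row v t ≥ q_i},
a free entry (a,b) is labelled iff for some i it lies in the north-west q_i × p_i
submatrix (a < q_i, b < p_i) and has no pivot in its row or column within that
submatrix (q_i ≤ v b and p_i ≤ v⁻¹ a).  With μ the outer shape,
μ_k = q_i − p_i + k'_i for k'_{i-1} < k ≤ k'_i, the number of labelled entries is
|μ| = Σ_i (k'_i − k'_{i-1})·(q_i − p_i + k'_i). -/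
theorem stmt8 (n s : ℕ) (hs : 1 ≤ s) (v : Equiv.Perm (Fin n)) (p q K : ℕ → ℕ)
    (hK0 : K 0 = 0)
    (hKdef : ∀ i, 1 ≤ i → i ≤ s →
      K i = (Finset.univ.filter (fun t : Fin n => (t : ℕ) < p i ∧ q i ≤ (v t : ℕ))).card)
    (hbounds : ∀ i, 1 ≤ i → i ≤ s → 1 ≤ p i ∧ p i ≤ n ∧ 1 ≤ q i ∧ q i ≤ n)
    (hpmono : ∀ i, 1 ≤ i → i < s → p i ≤ p (i + 1))
    (hqmono : ∀ i, 1 ≤ i → i < s → q (i + 1) ≤ q i)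
    (hKmono : ∀ i, 1 ≤ i → i < s → K i < K (i + 1))
    (hμnonneg : ∀ i, 1 ≤ i → i ≤ s → (p i : ℤ) ≤ (q i : ℤ) + K i)
    (hμdec : ∀ i, 1 ≤ i → i < s →
      (q (i + 1) : ℤ) - p (i + 1) + K (i + 1) ≤ (q i : ℤ) - p i + K i) :
    (({ab : Fin n × Fin n |
        (ab.1 : ℕ) < (v ab.2 : ℕ) ∧ (ab.2 : ℕ) < (v.symm ab.1 : ℕ) ∧
        ∃ i, 1 ≤ i ∧ i ≤ s ∧ (ab.1 : ℕ) < q i ∧ (ab.2 : ℕ) < p i ∧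
          q i ≤ (v ab.2 : ℕ) ∧ p i ≤ (v.symm ab.1 : ℕ)}.ncard : ℤ))
      = ∑ i ∈ Finset.Icc 1 s, ((K i : ℤ) - K (i - 1)) * ((q i : ℤ) - p i + K i) := by
  classical
  -- column sets and row sets
  set C : ℕ → Finset (Fin n) := fun i =>
    if i = 0 then ∅ else
      Finset.univ.filter (fun b : Fin n => (b : ℕ) < p i ∧ q i ≤ (v b : ℕ)) with hC
  set R : ℕ → Finset (Fin n) := fun i =>
    Finset.univ.filter (fun a : Fin n => (a : ℕ) < q i ∧ p i ≤ (v.symm a : ℕ)) with hR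
  -- monotonicity transitives
  have pmono : ∀ j, j ≤ s → ∀ i, 1 ≤ i → i ≤ j → p i ≤ p j := by
    intro j
    induction j with
    | zero => intro _ i h1 h2; omega
    | succ j ih =>
      intro hj i h1 h2
      rcases Nat.eq_or_lt_of_le h2 with h | h
      · exact h ▸ le_rfl
      · have hij : i ≤ j := by omega
        exact le_trans (ih (by omega) i h1 hij) (hpmono j (by omega) (by omega))
  have qmono : ∀ j, j ≤ s → ∀ i, 1 ≤ i → i ≤ j → q j ≤ q i := by
    intro j
    induction j with
    | zero => intro _ i h1 h2; omega
    | succ j ih =>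
      intro hj i h1 h2
      rcases Nat.eq_or_lt_of_le h2 with h | h
      · exact h ▸ le_rfl
      · have hij : i ≤ j := by omega
        exact le_trans (hqmono j (by omega) (by omega)) (ih (by omega) i h1 hij)
  have Kmono : ∀ j, j ≤ s → ∀ i, 1 ≤ i → i ≤ j → K i ≤ K j := by
    intro j
    induction j with
    | zero => intro _ i h1 h2; omega
    | succ j ih =>
      intro hj i h1 h2
      rcases Nat.eq_or_lt_of_le h2 with h | h
      · exact h ▸ le_rfl
      · have hij : i ≤ j := by omega
        exact le_trans (ih (by omega) i h1 hij) (le_of_lt (hKmono j (by omega) (by omega)))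
  -- C is monotone
  have Cmono : ∀ i j, i ≤ j → j ≤ s → C i ⊆ C j := by
    intro i j hij hj b hb
    rcases Nat.eq_zero_or_pos i with h0 | h1
    · simp [hC, h0] at hb
    · have hj1 : 1 ≤ j := by omega
      simp only [hC, if_neg (by omega : i ≠ 0), Finset.mem_filter, Finset.mem_univ,
        true_and] at hb
      simp only [hC, if_neg (by omega : j ≠ 0), Finset.mem_filter, Finset.mem_univ, true_and]
      exact ⟨lt_of_lt_of_le hb.1 (pmono j hj i h1 hij),
        le_trans (qmono j hj i h1 hij) hb.2⟩
  -- R is antitone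
  have Rmono : ∀ i j, 1 ≤ i → i ≤ j → j ≤ s → R j ⊆ R i := by
    intro i j h1 hij hj a ha
    simp only [hR, Finset.mem_filter, Finset.mem_univ, true_and] at ha ⊢
    exact ⟨lt_of_lt_of_le ha.1 (qmono j hj i h1 hij),
      le_trans (pmono j hj i h1 hij) ha.2⟩
  -- cardinality of C
  have cardC : ∀ i, i ≤ s → (C i).card = K i := by
    intro i hi
    rcases Nat.eq_zero_or_pos i with h0 | h1
    · simp [hC, h0, hK0]
    · simp only [hC, if_neg (by omega : i ≠ 0)]
      exact (hKdef i h1 hi).symm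
  -- cardinality of R
  have cardR : ∀ i, 1 ≤ i → i ≤ s → ((R i).card : ℤ) = (q i : ℤ) - p i + K i := by
    intro i h1 hi
    obtain ⟨hp1, hpn, hq1, hqn⟩ := hbounds i h1 hi
    set B := Finset.univ.filter (fun b : Fin n => (b : ℕ) < p i) with hB
    set A := Finset.univ.filter (fun a : Fin n => (a : ℕ) < q i) with hA
    have hBcard : B.card = p i := stmt8_card_filter_lt n (p i) hpn
    have hAcard : A.card = q i := stmt8_card_filter_lt n (q i) hqn
    -- split B
    have hBsplit : (B.filter (fun b => q i ≤ (v b : ℕ))).card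
        + (B.filter (fun b => ¬ q i ≤ (v b : ℕ))).card = p i := by
      rw [Finset.card_filter_add_card_filter_not, hBcard]
    have hBC : B.filter (fun b => q i ≤ (v b : ℕ)) = C i := by
      simp only [hC, if_neg (by omega : i ≠ 0), hB, Finset.filter_filter]
    have hAsplit : (A.filter (fun a => p i ≤ (v.symm a : ℕ))).card
        + (A.filter (fun a => ¬ p i ≤ (v.symm a : ℕ))).card = q i := by
      rw [Finset.card_filter_add_card_filter_not, hAcard]
    have hAR : A.filter (fun a => p i ≤ (v.symm a : ℕ)) = R i := by
      simp only [hR, hA, Finset.filter_filter]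
    -- bijection between complements
    have hbij : (A.filter (fun a => ¬ p i ≤ (v.symm a : ℕ))).card
        = (B.filter (fun b => ¬ q i ≤ (v b : ℕ))).card := by
      apply Finset.card_bij (fun a _ => v.symm a)
      · intro a ha
        simp only [hA, hB, Finset.mem_filter, Finset.mem_univ, true_and, not_le] at ha ⊢
        exact ⟨ha.2, by simpa using ha.1⟩
      · intro a _ a' _ h
        exact v.symm.injective h
      · intro b hb
        simp only [hA, hB, Finset.mem_filter, Finset.mem_univ, true_and, not_le] at hb
        refine ⟨v b, ?_, by simp⟩
        simp only [hA, Finset.mem_filter, Finset.mem_univ, true_and, not_le]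
        exact ⟨hb.2, by simpa using hb.1⟩
    rw [hBC] at hBsplit
    rw [hAR] at hAsplit
    rw [cardC i hi] at hBsplit
    omega
  -- the set as a finset
  set T : Finset (Fin n × Fin n) := Finset.univ.filter (fun ab : Fin n × Fin n =>
    ∃ i, 1 ≤ i ∧ i ≤ s ∧ (ab.1 : ℕ) < q i ∧ (ab.2 : ℕ) < p i ∧
      q i ≤ (v ab.2 : ℕ) ∧ p i ≤ (v.symm ab.1 : ℕ)) with hT
  have hset : {ab : Fin n × Fin n |
        (ab.1 : ℕ) < (v ab.2 : ℕ) ∧ (ab.2 : ℕ) < (v.symm ab.1 : ℕ) ∧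
        ∃ i, 1 ≤ i ∧ i ≤ s ∧ (ab.1 : ℕ) < q i ∧ (ab.2 : ℕ) < p i ∧
          q i ≤ (v ab.2 : ℕ) ∧ p i ≤ (v.symm ab.1 : ℕ)} = ↑T := by
    ext ab
    simp only [Set.mem_setOf_eq, hT, Finset.coe_filter, Finset.mem_univ, true_and,
      Set.mem_setOf_eq]
    constructor
    · rintro ⟨_, _, h⟩; exact h
    · rintro ⟨i, h1, hi, ha, hb, hvb, hva⟩
      exact ⟨lt_of_lt_of_le ha hvb, lt_of_lt_of_le hb hva, i, h1, hi, ha, hb, hvb, hva⟩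
  rw [hset, Set.ncard_coe_finset]
  -- T is the disjoint union of R i ×ˢ (C i \ C (i-1))
  have hTeq : T = (Finset.Icc 1 s).biUnion (fun i => R i ×ˢ (C i \ C (i - 1))) := by
    ext ⟨a, b⟩
    simp only [hT, Finset.mem_filter, Finset.mem_univ, true_and, Finset.mem_biUnion,
      Finset.mem_Icc, Finset.mem_product, Finset.mem_sdiff]
    constructor
    · rintro ⟨j, h1, hj, ha, hb, hvb, hva⟩
      have hbCj : b ∈ C j := by
        simp only [hC, if_neg (by omega : j ≠ 0), Finset.mem_filter, Finset.mem_univ, true_and]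
        exact ⟨hb, hvb⟩
      have hex : ∃ i, 1 ≤ i ∧ i ≤ s ∧ b ∈ C i := ⟨j, h1, hj, hbCj⟩
      set i := Nat.find hex with hidef
      obtain ⟨hi1, his, hbCi⟩ := Nat.find_spec hex
      have hile : i ≤ j := Nat.find_le ⟨h1, hj, hbCj⟩
      refine ⟨i, ⟨hi1, his⟩, ?_, hbCi, ?_⟩
      · -- a ∈ R i
        apply Rmono i j hi1 hile hj
        simp only [hR, Finset.mem_filter, Finset.mem_univ, true_and]
        exact ⟨ha, hva⟩
      · -- b ∉ C (i-1)
        intro hbprev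
        rcases Nat.eq_or_lt_of_le hi1 with h | h
        · rw [show i - 1 = 0 from by omega] at hbprev
          simp [hC] at hbprev
        · exact Nat.find_min hex (by omega : i - 1 < i) ⟨by omega, by omega, hbprev⟩
    · rintro ⟨i, ⟨h1, hi⟩, haR, hbC, _⟩
      simp only [hR, Finset.mem_filter, Finset.mem_univ, true_and] at haR
      simp only [hC, if_neg (by omega : i ≠ 0), Finset.mem_filter, Finset.mem_univ,
        true_and] at hbC
      exact ⟨i, h1, hi, haR.1, hbC.1, hbC.2, haR.2⟩
  have hdisj : ∀ x ∈ Finset.Icc 1 s, ∀ y ∈ Finset.Icc 1 s, x ≠ y →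
      Disjoint (R x ×ˢ (C x \ C (x - 1))) (R y ×ˢ (C y \ C (y - 1))) := by
    have key : ∀ x y, 1 ≤ x → x < y → y ≤ s →
        Disjoint (R x ×ˢ (C x \ C (x - 1))) (R y ×ˢ (C y \ C (y - 1))) := by
      intro x y hx hxy hy
      rw [Finset.disjoint_left]
      rintro ⟨a, b⟩ hab hab'
      simp only [Finset.mem_product, Finset.mem_sdiff] at hab hab'
      exact hab'.2.2 (Cmono x (y - 1) (by omega) (by omega) hab.2.1)
    intro x hx y hy hxy
    simp only [Finset.mem_Icc] at hx hy
    rcases lt_or_gt_of_ne hxy with h | h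
    · exact key x y hx.1 h hy.2
    · exact (key y x hy.1 h hx.2).symm
  rw [hTeq, Finset.card_biUnion hdisj]
  push_cast
  apply Finset.sum_congr rfl
  intro i hi
  simp only [Finset.mem_Icc] at hi
  obtain ⟨h1, his⟩ := hi
  have hsub : C (i - 1) ⊆ C i := Cmono (i - 1) i (by omega) his
  rw [Finset.card_product, Finset.card_sdiff_of_subset hsub, cardC i his, cardC (i - 1) (by omega)]
  have hKle : K (i - 1) ≤ K i := by
    rcases Nat.eq_or_lt_of_le h1 with h | h
    · simp [← h, hK0]
    · exact Kmono i his (i - 1) (by omega) (by omega)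
  have hRc := cardR i h1 his
  push_cast [hKle]
  rw [hRc]
  ring
end

section
/- In the northwest n × r_i submatrix of a generic matrix representative of the embedded cell Σ(X_v°) (as constructed in the paper, with pivot entries ±1, each column containing exactly one pivot, and exactly k'_i rows containing both a 1 and a -1), the rank is at least n - μ_{k'_i} = r_i - k'_i, for every choice of the free entries. -/
open Matrix


/-- Claim 6.4 of the paper, abstracted.  Let M be an n × r matrix over a field in
which every column j has a designated pivot entry M (piv j) j equal to 1 or -1,
with all entries strictly below a pivot equal to zero, every row containing at
most two pivots, and the two pivots in a common row having opposite signs (one 1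
and one -1).  If exactly k rows contain two pivots, then rank M ≥ r − k.
(In the paper's setting, r = r_i, k = k'_i, and r_i − k'_i = n − μ_{k'_i};
the free entries of the generic matrix are arbitrary.) -/
theorem stmt9 (F : Type*) [Field F] (n r : ℕ) (M : Matrix (Fin n) (Fin r) F)
    (piv : Fin r → Fin n)
    (hpm : ∀ j, M (piv j) j = 1 ∨ M (piv j) j = -1)
    (hbelow : ∀ (j : Fin r) (i : Fin n), piv j < i → M i j = 0)
    (hcard : ∀ i : Fin n, (Finset.univ.filter (fun j : Fin r => piv j = i)).card ≤ 2)
    (hsign : ∀ j1 j2 : Fin r, j1 ≠ j2 → piv j1 = piv j2 →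
      M (piv j1) j1 = - M (piv j2) j2) :
    r - (Finset.univ.filter
          (fun i : Fin n => 2 ≤ (Finset.univ.filter (fun j : Fin r => piv j = i)).card)).card
      ≤ M.rank := by
  classical
  set K : Finset (Fin n) := Finset.univ.filter
      (fun i : Fin n => 2 ≤ (Finset.univ.filter (fun j : Fin r => piv j = i)).card) with hK
  set T : Finset (Fin n) := Finset.univ.image piv with hT
  -- Step 1 : r ≤ T.card + K.card
  have hstep1 : r ≤ T.card + K.card := by
    have hsum : (Finset.univ : Finset (Fin r)).card
        = ∑ i ∈ T, (Finset.univ.filter (fun j : Fin r => piv j = i)).card := by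
      apply Finset.card_eq_sum_card_fiberwise
      intro j _
      exact Finset.mem_image.mpr ⟨j, Finset.mem_univ j, rfl⟩
    have hle : ∑ i ∈ T, (Finset.univ.filter (fun j : Fin r => piv j = i)).card
        ≤ ∑ i ∈ T, (1 + if i ∈ K then 1 else 0) := by
      apply Finset.sum_le_sum
      intro i _
      by_cases h : i ∈ K
      · simp only [h, if_true]
        exact hcard i
      · simp only [h, if_false, add_zero]
        have : ¬ 2 ≤ (Finset.univ.filter (fun j : Fin r => piv j = i)).card := by
          intro h2
          exact h (by simp [hK, h2])
        omega
    have hsplit : ∑ i ∈ T, (1 + if i ∈ K then 1 else 0)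
        = T.card + (T.filter (fun i => i ∈ K)).card := by
      rw [Finset.sum_add_distrib, Finset.sum_const, smul_eq_mul, mul_one,
        Finset.sum_boole]
      simp
    have hTK : (T.filter (fun i => i ∈ K)).card ≤ K.card :=
      Finset.card_le_card (by intro x hx; exact (Finset.mem_filter.mp hx).2)
    calc r = (Finset.univ : Finset (Fin r)).card := by simp
    _ = ∑ i ∈ T, (Finset.univ.filter (fun j : Fin r => piv j = i)).card := hsum
    _ ≤ T.card + (T.filter (fun i => i ∈ K)).card := le_of_le_of_eq hle hsplit
    _ ≤ T.card + K.card := by omega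
  -- Step 2 : choose one column per pivot row
  have hex : ∀ i : T, ∃ j : Fin r, piv j = (i : Fin n) := by
    rintro ⟨i, hi⟩
    obtain ⟨j, _, hj⟩ := Finset.mem_image.mp hi
    exact ⟨j, hj⟩
  choose c hc using hex
  -- Step 3 : the chosen columns are linearly independent
  set v : T → (Fin n → F) := fun i x => M x (c i) with hv
  have hind : LinearIndependent F v := by
    set N : Matrix T T F := fun a b => M (a : Fin n) (c b) with hN
    have htri : N.BlockTriangular id := by
      intro a b hab
      exact hbelow (c b) (a : Fin n) (by rw [hc b]; exact hab)
    have hdet : N.det ≠ 0 := by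
      rw [Matrix.det_of_upperTriangular htri]
      apply Finset.prod_ne_zero_iff.mpr
      intro a _
      have := hpm (c a)
      rw [hc a] at this
      rcases this with h | h <;> rw [show N a a = M (a : Fin n) (c a) from rfl, h] <;> simp
    have hunit : IsUnit N := (Matrix.isUnit_iff_isUnit_det N).mpr (Ne.isUnit hdet)
    have hcols : LinearIndependent F (fun b => Nᵀ b) :=
      Matrix.linearIndependent_cols_iff_isUnit.mpr hunit
    have hcomp : (fun b => Nᵀ b)
        = (LinearMap.funLeft F F (Subtype.val : T → Fin n)) ∘ v := by
      funext b
      rfl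
    rw [hcomp] at hcols
    exact hcols.of_comp _
  -- Step 4 : conclude
  have hrank : T.card ≤ M.rank := by
    rw [Matrix.rank_eq_finrank_span_cols]
    have hle : Submodule.span F (Set.range v) ≤ Submodule.span F (Set.range Mᵀ) := by
      apply Submodule.span_mono
      rintro _ ⟨i, rfl⟩
      exact ⟨c i, rfl⟩
    have heq : Module.finrank F (Submodule.span F (Set.range v)) = T.card := by
      rw [finrank_span_eq_card hind]
      simp
    calc T.card = Module.finrank F (Submodule.span F (Set.range v)) := heq.symm
    _ ≤ Module.finrank F (Submodule.span F (Set.range Mᵀ)) := Submodule.finrank_mono hle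
  omega
end
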